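/- Let G=(V,E) be a directed graph on V=[p] containing all self-loops with |E| > p(p+1)/2, and let C be any symmetric positive definite p×p matrix. Then the graphical continuous Lyapunov model M_{G,C} is non-identifiable: for every M₀ ∈ Stab(E), the fiber F_{G,C}(M₀) is infinite. -/

import Mathlib

open Matrix MeasureTheory

/-- A real square matrix is *stable* if every eigenvalue (over `ℂ`) has strictly
negative real part. -/
def IsStableMat {n : Type*} [Fintype n] [DecidableEq n] (M : Matrix n n ℝ) : Prop :=
  ∀ μ ∈ spectrum ℂ (M.map (algebraMap ℝ ℂ)), μ.re < 0

/-- `M ∈ ℝ^E`: the matrix `M` is supported on the directed graph with edge set `E`,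
i.e. `M j i = 0` whenever `(i, j) ∉ E`. -/
def InSupp {n : Type*} (E : Set (n × n)) (M : Matrix n n ℝ) : Prop :=
  ∀ i j : n, (i, j) ∉ E → M j i = 0

/-- The graphical continuous Lyapunov model `M_{G,C}`: positive definite matrices `S`
such that `M * S + S * Mᵀ + C = 0` for some `M ∈ ℝ^E`. -/
def LyapModel {n : Type*} [Fintype n] [DecidableEq n] (E : Set (n × n))
    (C : Matrix n n ℝ) : Set (Matrix n n ℝ) :=
  {S | S.PosDef ∧ ∃ M : Matrix n n ℝ, InSupp E M ∧ M * S + S * Mᵀ + C = 0}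

/-- Global identifiability: no two stable matrices supported on `E` yield the same
solution of the Lyapunov equation.  (Since for stable `M` the Lyapunov equation has a
unique positive definite solution `Σ(M,C)`, this is equivalent to every fiber
`F_{G,C}(M₀)` being the singleton `{M₀}`.) -/
def GloballyIdentifiable {n : Type*} [Fintype n] [DecidableEq n] (E : Set (n × n))
    (C : Matrix n n ℝ) : Prop :=
  ∀ M₁ M₂ : Matrix n n ℝ,
    InSupp E M₁ → IsStableMat M₁ → InSupp E M₂ → IsStableMat M₂ →
    ∀ S : Matrix n n ℝ, S.PosDef →
      M₁ * S + S * M₁ᵀ + C = 0 → M₂ * S + S * M₂ᵀ + C = 0 → M₁ = M₂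

/-- A directed graph is *simple* if it has no 2-cycles between distinct nodes. -/
def IsSimpleDigraph {n : Type*} (E : Set (n × n)) : Prop :=
  ∀ i j : n, i ≠ j → (i, j) ∈ E → (j, i) ∉ E

/-- The fiber `F_{G,C}(M₀)`: all stable matrices supported on `E` whose Lyapunov
solution coincides with that of `M₀`, i.e. some positive definite `S` solves the
Lyapunov equation for both `M₀` and `M`. -/
def Fiber {n : Type*} [Fintype n] [DecidableEq n] (E : Set (n × n))
    (C M₀ : Matrix n n ℝ) : Set (Matrix n n ℝ) :=
  {M | InSupp E M ∧ IsStableMat M ∧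
    ∃ S : Matrix n n ℝ, S.PosDef ∧ M₀ * S + S * M₀ᵀ + C = 0 ∧ M * S + S * Mᵀ + C = 0}

/-- The identification of the coordinate space `ℝ^{|E|}` with the matrices in `ℝ^E`:
the coordinate attached to an edge `(i,j)` is the entry `M j i`. -/
def edgeMatrix {p : ℕ} (E : Finset (Fin p × Fin p)) (f : E → ℝ) :
    Matrix (Fin p) (Fin p) ℝ :=
  fun j i => if h : (i, j) ∈ E then f ⟨(i, j), h⟩ else 0

/-- Generic identifiability: the set of parameter vectors `f ∈ ℝ^{|E|}` whose matrix
is stable but whose fiber is not a singleton is a Lebesgue null set. -/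
def GenericallyIdentifiable {p : ℕ} (E : Finset (Fin p × Fin p))
    (C : Matrix (Fin p) (Fin p) ℝ) : Prop :=
  volume {f : E → ℝ | IsStableMat (edgeMatrix E f) ∧
    Fiber (E : Set (Fin p × Fin p)) C (edgeMatrix E f) ≠ {edgeMatrix E f}} = 0

/-!
For a stable `M₀` the Lyapunov equation `M₀ Σ + Σ M₀ᵀ + C = 0` has a unique solution `Σ`, and it
is positive definite. The linear map `N ↦ N Σ + Σ Nᵀ` sends the `|E|`-dimensional space `ℝ^E`
into the symmetric matrices, of dimension `p (p + 1) / 2 < |E|`, so it kills some `N ≠ 0`. Every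
`M₀ + c N` then solves the Lyapunov equation with the same `Σ`, and is stable by Lyapunov's
criterion, so the fiber contains a whole line.
-/

open Polynomial

namespace Matrix

section

variable {n : Type*} [Fintype n] [DecidableEq n]

theorem spectrum_transpose {K : Type*} [Field K] (A : Matrix n n K) :
    spectrum K Aᵀ = spectrum K A := by
  ext μ
  simp only [mem_spectrum_iff_isRoot_charpoly, charpoly_transpose]

theorem exists_mulVec_eq_smul_of_mem_spectrum {K : Type*} [Field K] {A : Matrix n n K} {μ : K}
    (h : μ ∈ spectrum K A) : ∃ v ≠ 0, A *ᵥ v = μ • v := by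
  rw [← spectrum_toLin', ← Module.End.hasEigenvalue_iff_mem_spectrum] at h
  obtain ⟨v, hv, hv0⟩ := h.exists_hasEigenvector
  exact ⟨v, hv0, by simpa using Module.End.mem_eigenspace_iff.mp hv⟩

theorem aeval_mul_eq_mul_aeval {R : Type*} [CommRing R] {A B X : Matrix n n R}
    (h : A * X = X * B) (q : R[X]) : aeval A q * X = X * aeval B q := by
  induction q using Polynomial.induction_on' with
  | add p r hp hr => rw [map_add, map_add, add_mul, mul_add, hp, hr]
  | monomial k c =>
    have hpow : X * B ^ k = A ^ k * X := SemiconjBy.pow_right h.symm k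
    simp only [aeval_monomial, Algebra.algebraMap_eq_smul_one, smul_mul_assoc, one_mul,
      mul_smul_comm, ← hpow]

/-- Sylvester: `χ_B(A)` is invertible while `χ_B(A) X = X χ_B(B) = 0`. -/
theorem eq_zero_of_mul_eq_mul_of_disjoint_spectrum {K : Type*} [Field K] [IsAlgClosed K]
    {A B X : Matrix n n K} (hAB : Disjoint (spectrum K A) (spectrum K B)) (h : A * X = X * B) :
    X = 0 := by
  cases isEmpty_or_nonempty n
  · exact Subsingleton.elim _ _
  have hunit : IsUnit (aeval A B.charpoly) := by
    rw [← spectrum.zero_notMem_iff K, spectrum.map_polynomial_aeval_of_nonempty _ _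
      (spectrum.nonempty_of_isAlgClosed_of_finiteDimensional K A)]
    rintro ⟨z, hzA, hz⟩
    exact hAB.notMem_of_mem_left hzA (mem_spectrum_iff_isRoot_charpoly.mpr hz)
  rw [← hunit.mul_right_eq_zero, aeval_mul_eq_mul_aeval h, aeval_self_charpoly, mul_zero]

open scoped MatrixOrder ComplexOrder in
theorem PosDef.map_ofReal {S : Matrix n n ℝ} (hS : S.PosDef) :
    (S.map (algebraMap ℝ ℂ)).PosDef := by
  obtain ⟨B, rfl⟩ := CStarAlgebra.nonneg_iff_eq_star_mul_self.mp hS.posSemidef.nonneg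
  have hB : (star B * B).map (algebraMap ℝ ℂ) =
      (B.map (algebraMap ℝ ℂ))ᴴ * B.map (algebraMap ℝ ℂ) := by
    rw [Matrix.map_mul, star_eq_conjTranspose, conjTranspose_map _ (fun _ => by simp)]
  have hunit := hS.isUnit.map (algebraMap ℝ ℂ).mapMatrix
  rw [RingHom.mapMatrix_apply, hB] at hunit
  rw [hB]
  exact (posSemidef_conjTranspose_mul_self _).posDef_iff_isUnit.mpr hunit

end

section

variable {n : Type*} [Fintype n]

theorem dotProduct_mulVec_eq_sq_norm_mul (A : Matrix n n ℝ) {x : n → ℝ} (hx : x ≠ 0) :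
    x ⬝ᵥ A *ᵥ x = ‖x‖ ^ 2 * ((‖x‖⁻¹ • x) ⬝ᵥ A *ᵥ (‖x‖⁻¹ • x)) := by
  have : ‖x‖ ≠ 0 := norm_ne_zero_iff.mpr hx
  simp only [mulVec_smul, dotProduct_smul, smul_dotProduct, smul_eq_mul]
  field_simp

theorem posDef_of_forall_mem_sphere {A : Matrix n n ℝ} (hA : A.IsHermitian)
    (h : ∀ x ∈ Metric.sphere (0 : n → ℝ) 1, 0 < x ⬝ᵥ A *ᵥ x) : A.PosDef :=
  .of_dotProduct_mulVec_pos hA fun x hx => by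
    rw [star_trivial, dotProduct_mulVec_eq_sq_norm_mul A hx]
    exact mul_pos (by positivity) (h _ (mem_sphere_zero_iff_norm.mpr (norm_smul_inv_norm hx)))

theorem posSemidef_of_forall_mem_sphere {A : Matrix n n ℝ} (hA : A.IsHermitian)
    (h : ∀ x ∈ Metric.sphere (0 : n → ℝ) 1, 0 ≤ x ⬝ᵥ A *ᵥ x) : A.PosSemidef :=
  .of_dotProduct_mulVec_nonneg hA fun x => by
    rcases eq_or_ne x 0 with rfl | hx
    · simp
    rw [star_trivial, dotProduct_mulVec_eq_sq_norm_mul A hx]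
    exact mul_nonneg (by positivity) (h _ (mem_sphere_zero_iff_norm.mpr (norm_smul_inv_norm hx)))

/-- Positivity on the unit sphere is an open condition, and a limit of positive definite matrices
is positive semidefinite, hence positive definite if invertible. -/
theorem posDef_of_isPreconnected [DecidableEq n] {T : Set (Matrix n n ℝ)} (hT : IsPreconnected T)
    (hT' : ∀ A ∈ T, A.IsHermitian ∧ IsUnit A) {A B : Matrix n n ℝ} (hA : A ∈ T) (hB : B ∈ T)
    (hPD : A.PosDef) : B.PosDef := by
  set K := Metric.sphere (0 : n → ℝ) 1
  set U := {A : Matrix n n ℝ | ∀ x ∈ K, 0 < x ⬝ᵥ A *ᵥ x}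
  have hform : Continuous fun p : Matrix n n ℝ × (n → ℝ) => p.2 ⬝ᵥ p.1 *ᵥ p.2 := by fun_prop
  have hU : IsOpen U := by
    refine isOpen_iff_eventually.mpr fun A hA => ?_
    exact (isCompact_sphere 0 1).eventually_forall_of_forall_eventually fun x hx =>
      hform.continuousAt.preimage_mem_nhds (Ioi_mem_nhds (hA x hx))
  have hclosure : closure U ⊆ {A | ∀ x ∈ K, 0 ≤ x ⬝ᵥ A *ᵥ x} := by
    refine closure_minimal (fun A hA x hx => (hA x hx).le) ?_
    simp only [Set.ofPred_forall]
    exact isClosed_biInter fun x _ => isClosed_le continuous_const (by fun_prop)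
  have hTU : T ⊆ U := by
    refine hT.subset_of_closure_inter_subset hU ⟨A, hA, fun x hx => ?_⟩ fun C ⟨hCU, hCT⟩ => ?_
    · simpa using hPD.dotProduct_mulVec_pos (Metric.ne_of_mem_sphere hx one_ne_zero)
    · have hpsd := posSemidef_of_forall_mem_sphere (hT' C hCT).1 (hclosure hCU)
      have hpd := hpsd.posDef_iff_isUnit.mpr (hT' C hCT).2
      exact fun x hx => by
        simpa using hpd.dotProduct_mulVec_pos (Metric.ne_of_mem_sphere hx one_ne_zero)
  exact posDef_of_forall_mem_sphere (hT' B hB).1 (hTU hB)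

end

end Matrix

/-- In coordinates, the solution is `A(x)⁻¹ w` with `A(x)` the matrix of `L x`. -/
theorem continuousOn_of_forall_apply_eq {X V ι : Type*} [TopologicalSpace X] [AddCommGroup V]
    [Module ℝ V] [TopologicalSpace V] [IsTopologicalAddGroup V] [ContinuousSMul ℝ V]
    [Fintype ι] [DecidableEq ι] (b : Module.Basis ι ℝ V) {L : X → Module.End ℝ V}
    (hL : Continuous fun x => LinearMap.toMatrix b b (L x)) {I : Set X}
    (hinj : ∀ x ∈ I, Function.Injective (L x)) {w : V} {S : X → V}
    (hS : ∀ x ∈ I, L x (S x) = w) : ContinuousOn S I := by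
  set A := fun x => LinearMap.toMatrix b b (L x)
  have hA : ∀ x v, A x *ᵥ b.equivFun v = b.equivFun (L x v) := fun x v => by
    simpa using LinearMap.toMatrix_mulVec_repr b b (L x) v
  have hunit : ∀ x ∈ I, IsUnit (A x) := fun x hx => by
    refine mulVec_injective_iff_isUnit.mp fun c c' hc => ?_
    rw [← b.equivFun.apply_symm_apply c, ← b.equivFun.apply_symm_apply c', hA, hA] at hc
    exact b.equivFun.symm.injective (hinj x hx (b.equivFun.injective hc))
  have hsol : ∀ x ∈ I, S x = b.equivFun.symm ((A x)⁻¹ *ᵥ b.equivFun w) := fun x hx => by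
    have := (hunit x hx).invertible
    rw [eq_comm, LinearEquiv.symm_apply_eq]
    exact inv_mulVec_eq_vec (by rw [hA, hS x hx])
  refine ContinuousOn.congr (fun x hx => ContinuousAt.continuousWithinAt ?_) hsol
  have hinv : ContinuousAt (fun x => (A x)⁻¹) x := by
    refine (continuousAt_matrix_inv _ ?_).comp hL.continuousAt
    rw [Ring.inverse_eq_inv']
    exact continuousAt_inv₀ ((isUnit_iff_isUnit_det _).mp (hunit x hx)).ne_zero
  simp only [Module.Basis.equivFun_symm_apply]
  fun_prop

/-- `A ↦ (s(i, j) ↦ A i j + A j i)` is injective on symmetric matrices, so a space of symmetric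
matrices has dimension at most `|Sym2 n|`. -/
theorem exists_ne_zero_map_eq_zero_of_isSymm {K V n : Type*} [Field K] [NeZero (2 : K)]
    [AddCommGroup V] [Module K V] [FiniteDimensional K V] [Fintype n]
    (L : V →ₗ[K] Matrix n n K) (hL : ∀ v, (L v).IsSymm)
    (hdim : Fintype.card (Sym2 n) < Module.finrank K V) : ∃ v ≠ 0, L v = 0 := by
  let P : Matrix n n K →ₗ[K] Sym2 n → K :=
    { toFun := fun A => Sym2.lift ⟨fun i j => A i j + A j i, fun _ _ => add_comm _ _⟩
      map_add' := fun A B => by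
        ext z
        induction z using Sym2.ind
        simp only [Sym2.lift_mk, Matrix.add_apply, Pi.add_apply]
        ring
      map_smul' := fun c A => by
        ext z
        induction z using Sym2.ind
        simp only [Sym2.lift_mk, Matrix.smul_apply, smul_eq_mul, Pi.smul_apply, RingHom.id_apply]
        ring }
  have hker : LinearMap.ker (P ∘ₗ L) ≠ ⊥ := LinearMap.ker_ne_bot_of_finrank_lt (by
    rwa [Module.finrank_fintype_fun_eq_card])
  obtain ⟨v, hv, hv0⟩ := (Submodule.ne_bot_iff _).mp hker
  refine ⟨v, hv0, ext fun i j => ?_⟩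
  have hij : L v i j + L v j i = 0 := congrFun (LinearMap.mem_ker.mp hv) s(i, j)
  rw [(hL v).apply i j, ← two_mul] at hij
  exact (mul_eq_zero.mp hij).resolve_left two_ne_zero

section Lyapunov

variable {n : Type*} [Fintype n] [DecidableEq n]

def lyapunovMap (R : Type*) [CommRing R] :
    Matrix n n R →ₗ[R] Matrix n n R →ₗ[R] Matrix n n R :=
  LinearMap.mk₂ R (fun M S => M * S + S * Mᵀ)
    (fun M₁ M₂ S => by simp only [add_mul, mul_add, transpose_add]; abel)
    (fun c M S => by simp only [smul_mul_assoc, transpose_smul, mul_smul_comm, smul_add])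
    (fun M S₁ S₂ => by simp only [add_mul, mul_add]; abel)
    (fun c M S => by simp only [smul_mul_assoc, mul_smul_comm, smul_add])

@[simp]
theorem lyapunovMap_apply {R : Type*} [CommRing R] (M S : Matrix n n R) :
    lyapunovMap R M S = M * S + S * Mᵀ :=
  rfl

theorem lyapunovMap_map {R R' : Type*} [CommRing R] [CommRing R'] (f : R →+* R')
    (M S : Matrix n n R) :
    f.mapMatrix (lyapunovMap R M S) = lyapunovMap R' (f.mapMatrix M) (f.mapMatrix S) := by
  rw [lyapunovMap_apply, lyapunovMap_apply, map_add, map_mul, map_mul]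
  simp [transpose_map]

theorem isSymm_lyapunovMap {R : Type*} [CommRing R] (M : Matrix n n R) {S : Matrix n n R}
    (hS : S.IsSymm) : (lyapunovMap R M S).IsSymm := by
  simp only [IsSymm, lyapunovMap_apply, transpose_add, transpose_mul, transpose_transpose,
    hS.eq, add_comm]

/-- The spectra of `M` and `-Mᵀ` lie in opposite open half-planes. -/
theorem IsStableMat.injective_lyapunovMap {M : Matrix n n ℝ} (hM : IsStableMat M) :
    Function.Injective (lyapunovMap ℝ M) := by
  rw [← LinearMap.ker_eq_bot, LinearMap.ker_eq_bot']
  intro X hX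
  set f := (algebraMap ℝ ℂ).mapMatrix (m := n)
  have hc : f M * f X = f X * -(f M)ᵀ := by
    have := congrArg f hX
    rw [lyapunovMap_map, map_zero, lyapunovMap_apply] at this
    rw [mul_neg, ← add_eq_zero_iff_eq_neg]
    exact this
  have hdisj : Disjoint (spectrum ℂ (f M)) (spectrum ℂ (-(f M)ᵀ)) := by
    rw [← spectrum.neg_eq, spectrum_transpose, Set.disjoint_left]
    intro μ hμ hμ'
    have h₁ := hM μ hμ
    have h₂ := hM (-μ) hμ'
    rw [Complex.neg_re] at h₂
    linarith
  have := eq_zero_of_mul_eq_mul_of_disjoint_spectrum hdisj hc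
  exact Matrix.map_injective (algebraMap ℝ ℂ).injective this

theorem IsStableMat.exists_lyapunov_eq {M : Matrix n n ℝ} (hM : IsStableMat M)
    (C : Matrix n n ℝ) : ∃ S, M * S + S * Mᵀ + C = 0 := by
  obtain ⟨S, hS⟩ := LinearMap.injective_iff_surjective.mp hM.injective_lyapunovMap (-C)
  exact ⟨S, by rw [← lyapunovMap_apply, hS, neg_add_cancel]⟩

theorem IsStableMat.isSymm_of_lyapunov_eq {M S C : Matrix n n ℝ} (hM : IsStableMat M)
    (hC : C.IsSymm) (h : M * S + S * Mᵀ + C = 0) : S.IsSymm := by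
  apply hM.injective_lyapunovMap
  have := congrArg transpose h
  simp only [transpose_add, transpose_mul, transpose_transpose, transpose_zero, hC.eq] at this
  rw [lyapunovMap_apply, lyapunovMap_apply, add_comm]
  exact add_right_cancel (this.trans h.symm)

theorem isUnit_of_lyapunov_eq {M S C : Matrix n n ℝ} (hC : C.PosDef) (hS : S.IsSymm)
    (h : M * S + S * Mᵀ + C = 0) : IsUnit S := by
  rw [isUnit_iff_isUnit_det, isUnit_iff_ne_zero, Ne, ← exists_mulVec_eq_zero_iff]
  rintro ⟨x, hx, hSx⟩
  have hxS : x ᵥ* S = 0 := by rw [← hS.eq, vecMul_transpose, hSx]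
  have hCx : x ⬝ᵥ C *ᵥ x = 0 := by
    rw [eq_neg_of_add_eq_zero_right h, neg_mulVec, add_mulVec, ← mulVec_mulVec,
      ← mulVec_mulVec, hSx, dotProduct_neg, dotProduct_add, dotProduct_mulVec x S, hxS]
    simp
  exact (hC.dotProduct_mulVec_pos hx).ne' hCx

open scoped ComplexOrder in
/-- Lyapunov's criterion: for a left eigenvector `v` of `M` with eigenvalue `μ`, the equation
gives `2 Re μ · v* S v = - v* C v`. -/
theorem isStableMat_of_lyapunov_eq {M S C : Matrix n n ℝ} (hS : S.PosDef) (hC : C.PosDef)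
    (h : M * S + S * Mᵀ + C = 0) : IsStableMat M := by
  intro μ hμ
  set f := (algebraMap ℝ ℂ).mapMatrix (m := n)
  have h' : lyapunovMap ℂ (f M) (f S) + f C = 0 := by
    rw [← lyapunovMap_map, ← map_add, lyapunovMap_apply, h, map_zero]
  rw [← spectrum_transpose] at hμ
  obtain ⟨v, hv, hMv⟩ := exists_mulVec_eq_smul_of_mem_spectrum hμ
  change (f M)ᵀ *ᵥ v = μ • v at hMv
  have hvM : star v ᵥ* f M = star μ • star v := by
    have hreal : (f M)ᵀᴴ = f M := by ext; simp [f]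
    rw [← star_smul, ← hMv, star_mulVec]
    exact congrArg _ hreal.symm
  have key : (star μ + μ) * (star v ⬝ᵥ f S *ᵥ v) + star v ⬝ᵥ f C *ᵥ v = 0 := by
    have := congrArg (fun A => star v ⬝ᵥ A *ᵥ v) h'
    simp only [lyapunovMap_apply, zero_mulVec, dotProduct_zero, add_mulVec, dotProduct_add,
      ← mulVec_mulVec] at this
    rw [dotProduct_mulVec, hvM, hMv] at this
    rw [← this]
    simp only [smul_dotProduct, mulVec_smul, dotProduct_smul, smul_eq_mul]
    ring
  have hq : 0 < star v ⬝ᵥ f S *ᵥ v := hS.map_ofReal.dotProduct_mulVec_pos hv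
  have hc : 0 < star v ⬝ᵥ f C *ᵥ v := hC.map_ofReal.dotProduct_mulVec_pos hv
  rw [Complex.lt_def] at hq hc
  have hre := congrArg Complex.re key
  simp only [Complex.add_re, Complex.mul_re, Complex.star_def, Complex.conj_re, ← hq.2,
    Complex.zero_re, Complex.zero_im, mul_zero, sub_zero] at hre hq hc
  nlinarith

theorem IsStableMat.smul_sub_smul_one {M : Matrix n n ℝ} (hM : IsStableMat M) {t : ℝ} (ht₀ : 0 ≤ t)
    (ht₁ : t ≤ 1) : IsStableMat (t • M - (1 - t) • 1) := by
  intro μ hμ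
  cases isEmpty_or_nonempty n
  · simp [spectrum.of_subsingleton] at hμ
  have hp : (t • M - (1 - t) • 1).map (algebraMap ℝ ℂ) =
      aeval (M.map (algebraMap ℝ ℂ)) (C (t : ℂ) * X - C ((1 - t : ℝ) : ℂ)) := by
    ext i j
    by_cases hij : i = j <;> simp [hij, Algebra.algebraMap_eq_smul_one, one_apply]
  rw [hp, spectrum.map_polynomial_aeval_of_nonempty _ _
    (spectrum.nonempty_of_isAlgClosed_of_finiteDimensional ℂ _)] at hμ
  obtain ⟨z, hz, rfl⟩ := hμ
  have := hM z hz
  simp only [eval_sub, eval_mul, eval_C, eval_X, Complex.sub_re, Complex.mul_re,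
    Complex.ofReal_re, Complex.ofReal_im, zero_mul, sub_zero]
  rcases ht₁.lt_or_eq with ht | rfl
  · nlinarith
  · linarith

/-- Deform `M` to `-1` through the stable matrices `t M - (1 - t)`: the solutions vary
continuously, stay symmetric and invertible, and equal `C / 2` at `t = 0`. -/
theorem IsStableMat.posDef_of_lyapunov_eq {M S C : Matrix n n ℝ} (hM : IsStableMat M)
    (hC : C.PosDef) (h : M * S + S * Mᵀ + C = 0) : S.PosDef := by
  set Mt : ℝ → Matrix n n ℝ := fun t => t • M - (1 - t) • 1
  have hstab : ∀ t ∈ Set.Icc (0 : ℝ) 1, IsStableMat (Mt t) := fun t ht => hM.smul_sub_smul_one ht.1 ht.2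
  choose! St hSt using fun t (ht : t ∈ Set.Icc (0 : ℝ) 1) => (hstab t ht).exists_lyapunov_eq C
  have hcont : ContinuousOn St (Set.Icc 0 1) := by
    refine continuousOn_of_forall_apply_eq (Matrix.stdBasis ℝ n n)
      (L := fun t => lyapunovMap ℝ (Mt t)) ?_ (fun t ht => (hstab t ht).injective_lyapunovMap)
      (w := -C) fun t ht => by rw [lyapunovMap_apply, eq_neg_iff_add_eq_zero, hSt t ht]
    simp only [Mt, map_sub, map_smul]
    fun_prop
  have hS₀ : St 0 = (2⁻¹ : ℝ) • C := by
    have := hSt 0 (by simp)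
    simp only [Mt, zero_smul, sub_zero, one_smul, zero_sub, neg_mul, one_mul, transpose_neg,
      transpose_one, mul_neg, mul_one] at this
    linear_combination (norm := module) (-2⁻¹ : ℝ) • this
  have hS₁ : St 1 = S := by
    apply hM.injective_lyapunovMap
    rw [lyapunovMap_apply, lyapunovMap_apply, eq_neg_of_add_eq_zero_left h]
    simpa [Mt] using eq_neg_of_add_eq_zero_left (hSt 1 (by simp))
  have hI : ∀ A ∈ St '' Set.Icc 0 1, A.IsHermitian ∧ IsUnit A := by
    rintro _ ⟨t, ht, rfl⟩
    have hsymm := (hstab t ht).isSymm_of_lyapunov_eq hC.isHermitian (hSt t ht)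
    exact ⟨hsymm, isUnit_of_lyapunov_eq hC hsymm (hSt t ht)⟩
  rw [← hS₁]
  exact posDef_of_isPreconnected (isPreconnected_Icc.image _ hcont) hI
    (Set.mem_image_of_mem _ (by simp)) (Set.mem_image_of_mem _ (by simp))
    (hS₀ ▸ hC.smul (by norm_num))

theorem add_smul_mem_fiber {E : Set (n × n)} {C M₀ S N : Matrix n n ℝ} (hC : C.PosDef)
    (hM₀ : InSupp E M₀) (hS : S.PosDef) (h₀ : M₀ * S + S * M₀ᵀ + C = 0) (hN : InSupp E N)
    (hNS : N * S + S * Nᵀ = 0) (c : ℝ) : M₀ + c • N ∈ Fiber E C M₀ := by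
  have heq : (M₀ + c • N) * S + S * (M₀ + c • N)ᵀ + C = 0 := by
    rw [← lyapunovMap_apply, map_add, map_smul, LinearMap.add_apply, LinearMap.smul_apply,
      lyapunovMap_apply, lyapunovMap_apply, hNS, smul_zero, add_zero, h₀]
  refine ⟨fun i j hij => ?_, isStableMat_of_lyapunov_eq hS hC heq, S, hS, h₀, heq⟩
  simp [hM₀ i j hij, hN i j hij]

theorem fiber_infinite_of_ne_zero {E : Set (n × n)} {C M₀ S N : Matrix n n ℝ} (hC : C.PosDef)
    (hM₀ : InSupp E M₀) (hS : S.PosDef) (h₀ : M₀ * S + S * M₀ᵀ + C = 0) (hN : InSupp E N)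
    (hN₀ : N ≠ 0) (hNS : N * S + S * Nᵀ = 0) : (Fiber E C M₀).Infinite :=
  Set.infinite_of_injective_forall_mem ((add_right_injective M₀).comp (smul_left_injective ℝ hN₀))
    (add_smul_mem_fiber hC hM₀ hS h₀ hN hNS)

end Lyapunov

section EdgeMatrix

variable {p : ℕ} (E : Finset (Fin p × Fin p))

def edgeMatrixLinearMap : (E → ℝ) →ₗ[ℝ] Matrix (Fin p) (Fin p) ℝ where
  toFun := edgeMatrix E
  map_add' f g := by
    ext j i
    by_cases h : (i, j) ∈ E <;> simp [edgeMatrix, h]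
  map_smul' c f := by
    ext j i
    by_cases h : (i, j) ∈ E <;> simp [edgeMatrix, h]

theorem inSupp_edgeMatrix (f : E → ℝ) : InSupp (E : Set (Fin p × Fin p)) (edgeMatrix E f) :=
  fun i j h => by simp [edgeMatrix, dif_neg (Finset.mem_coe.not.mp h)]

theorem edgeMatrix_injective : Function.Injective (edgeMatrix E) := fun f g hfg => by
  ext ⟨⟨i, j⟩, h⟩
  simpa [edgeMatrix, h] using congrFun₂ hfg j i

end EdgeMatrix

theorem too_many_edges_non_identifiable_general {p : ℕ}
    (E : Finset (Fin p × Fin p))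
    (hcard : E.card > p * (p + 1) / 2)
    (C : Matrix (Fin p) (Fin p) ℝ) (hC : C.PosDef) :
    ∀ M₀ : Matrix (Fin p) (Fin p) ℝ,
      InSupp (E : Set (Fin p × Fin p)) M₀ → IsStableMat M₀ →
      (Fiber (E : Set (Fin p × Fin p)) C M₀).Infinite := by
  intro M₀ hM₀ hstab
  obtain ⟨S, hS⟩ := hstab.exists_lyapunov_eq C
  have hSpd := hstab.posDef_of_lyapunov_eq hC hS
  have hdim : Fintype.card (Sym2 (Fin p)) < Module.finrank ℝ (E → ℝ) := by
    rw [Sym2.card, Fintype.card_fin, Nat.choose_two_right, Module.finrank_fintype_fun_eq_card,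
      Fintype.card_coe, Nat.add_sub_cancel, mul_comm]
    exact hcard
  obtain ⟨f, hf, hfS⟩ := exists_ne_zero_map_eq_zero_of_isSymm
    ((lyapunovMap ℝ).flip S ∘ₗ edgeMatrixLinearMap E)
    (fun f => isSymm_lyapunovMap _ hSpd.isHermitian) hdim
  exact fiber_infinite_of_ne_zero hC hM₀ hSpd hS (inSupp_edgeMatrix E f)
    ((map_ne_zero_iff (edgeMatrixLinearMap E) (edgeMatrix_injective E)).mpr hf) hfS

/-- if the graph has more than `p(p+1)/2` edges, then the model is
non-identifiable: every fiber is infinite. -/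
theorem too_many_edges_non_identifiable {p : ℕ}
    (E : Finset (Fin p × Fin p)) (hloops : ∀ i : Fin p, (i, i) ∈ E)
    (hcard : E.card > p * (p + 1) / 2)
    (C : Matrix (Fin p) (Fin p) ℝ) (hC : C.PosDef) :
    ∀ M₀ : Matrix (Fin p) (Fin p) ℝ,
      InSupp (E : Set (Fin p × Fin p)) M₀ → IsStableMat M₀ →
      (Fiber (E : Set (Fin p × Fin p)) C M₀).Infinite :=
  too_many_edges_non_identifiable_general E hcard C hC
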